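/- arXiv:1710.05332 — 4 statements merged into one kernel-verified Lean document; each statement's English description precedes it below -/
import Mathlib

section
/- For n boxes with positive costs, define T_k([n]) as the complete homogeneous symmetric polynomial of degree k. Then (k+1)·T_{k+1}([n]) − T_1([n])·T_k([n]) equals the sum over all nonnegative integer vectors x = (x_1,...,x_n) with x_1+...+x_n = k of (∏_{i=1}^n c_i^{x_i})·(∑_{j=1}^n x_j c_j). -/
/-!
Euler's identity for homogeneous functions in combinatorial form: `(k + 1) T_{k+1}` is
`∑_j ∑_{|y| = k+1} y_j c^y`, and writing `y = x + e_j` turns this into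
`∑_{|x| = k} ∑_j (x_j + 1) c_j c^x`. The `+ 1` part is exactly `T_1 T_k`, and what remains
is `∑_{|x| = k} c^x ∑_j x_j c_j`.
-/

/-- Complete homogeneous symmetric polynomial of degree `k` in `c 0, ..., c (n-1)`:
sum over nonnegative integer vectors summing to `k` of the monomials. -/
noncomputable def T (c : ℕ → ℝ) (n k : ℕ) : ℝ :=
  ∑ x ∈ Finset.Nat.antidiagonalTuple n k, ∏ i : Fin n, c i ^ x i

namespace Finset.Nat

variable {R : Type*} [CommSemiring R] {n : ℕ}

theorem natCast_mul_sum_antidiagonalTuple (k : ℕ) (f : (Fin n → ℕ) → R) :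
    (k : R) * ∑ x ∈ antidiagonalTuple n k, f x =
      ∑ j : Fin n, ∑ x ∈ antidiagonalTuple n k, (x j : R) * f x := by
  rw [Finset.sum_comm, Finset.mul_sum]
  refine Finset.sum_congr rfl fun x hx => ?_
  rw [← Finset.sum_mul, ← Nat.cast_sum, mem_antidiagonalTuple.mp hx]

/-- `x ↦ x + Pi.single j 1` is a bijection from the tuples of sum `k` onto the tuples of
sum `k + 1` with `y j ≠ 0`; the tuples with `y j = 0` contribute nothing. -/
theorem sum_antidiagonalTuple_succ_coord_mul [DecidableEq (Fin n)] (k : ℕ) (j : Fin n)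
    (f : (Fin n → ℕ) → R) :
    ∑ y ∈ antidiagonalTuple n (k + 1), (y j : R) * f y =
      ∑ x ∈ antidiagonalTuple n k, ((x j : R) + 1) * f (x + Pi.single j 1) := by
  rw [← Finset.sum_filter_of_ne (p := fun y => y j ≠ 0) fun y _ h hy => h (by simp [hy])]
  symm
  refine Finset.sum_nbij' (· + Pi.single j 1) (· - Pi.single j 1) ?_ ?_ ?_ ?_ ?_
  · intro x hx
    simp only [mem_filter, mem_antidiagonalTuple, Pi.add_apply, Finset.sum_add_distrib,
      Finset.sum_pi_single', mem_univ, if_true] at hx ⊢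
    simp [hx]
  · intro y hy
    simp only [mem_filter, mem_antidiagonalTuple] at hy ⊢
    have hsplit : y = (y - Pi.single j 1) + Pi.single j 1 := by
      ext i; rcases eq_or_ne i j with rfl | hi <;> simp [*]; omega
    have hsum := hy.1
    rw [hsplit] at hsum
    simpa [Finset.sum_add_distrib] using hsum
  · intro x _
    ext i; simp
  · intro y hy
    ext i
    rcases eq_or_ne i j with rfl | hi
    · have := (mem_filter.mp hy).2; simp; omega
    · simp [hi]
  · intro x _
    simp

end Finset.Nat

theorem prod_pow_add_single {M : Type*} [CommMonoid M] {n : ℕ} [DecidableEq (Fin n)]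
    (c : Fin n → M) (x : Fin n → ℕ) (j : Fin n) :
    ∏ i, c i ^ (x + Pi.single j 1 : Fin n → ℕ) i = c j * ∏ i, c i ^ x i := by
  have hsingle : ∏ i, c i ^ (Pi.single j 1 : Fin n → ℕ) i = c j := by
    rw [Fintype.prod_eq_single j fun i hi => by simp [hi]]
    simp
  rw [← hsingle, ← Finset.prod_mul_distrib]
  simp only [Pi.add_apply, pow_add, mul_comm]

theorem succ_mul_T (c : ℕ → ℝ) (n k : ℕ) :
    (k + 1 : ℝ) * T c n (k + 1) =
      ∑ j : Fin n, ∑ x ∈ Finset.Nat.antidiagonalTuple n k,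
        ((x j : ℝ) + 1) * (c j * ∏ i : Fin n, c i ^ x i) := by
  classical
  rw [T, ← Nat.cast_succ, Finset.Nat.natCast_mul_sum_antidiagonalTuple]
  refine Finset.sum_congr rfl fun j _ => ?_
  rw [Finset.Nat.sum_antidiagonalTuple_succ_coord_mul]
  simp only [prod_pow_add_single (fun i : Fin n => c i)]

theorem T_one (c : ℕ → ℝ) (n : ℕ) : T c n 1 = ∑ j : Fin n, c j := by
  simpa [Finset.Nat.antidiagonalTuple_zero_right] using succ_mul_T c n 0

theorem stmt1_general (c : ℕ → ℝ) (n k : ℕ) :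
    (k + 1 : ℝ) * T c n (k + 1) - T c n 1 * T c n k =
      ∑ x ∈ Finset.Nat.antidiagonalTuple n k,
        (∏ i : Fin n, c i ^ x i) * (∑ j : Fin n, (x j : ℝ) * c j) := by
  rw [succ_mul_T, T_one, T, Finset.sum_comm, Finset.mul_sum, ← Finset.sum_sub_distrib]
  refine Finset.sum_congr rfl fun x _ => ?_
  rw [Finset.sum_mul, ← Finset.sum_sub_distrib, Finset.mul_sum]
  exact Finset.sum_congr rfl fun j _ => by ring

theorem stmt1 (c : ℕ → ℝ) (hc : ∀ i, 0 < c i) (n k : ℕ) :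
    (k + 1 : ℝ) * T c n (k + 1) - T c n 1 * T c n k =
      ∑ x ∈ Finset.Nat.antidiagonalTuple n k,
        (∏ i : Fin n, c i ^ x i) * (∑ j : Fin n, (x j : ℝ) * c j) :=
  stmt1_general c n k
end

section
/- For each integer m ≥ 2, the polynomial f_m(r) = −(m−1) + r + r² + ... + r^m has a unique root in the open interval (0,1). -/
/-- f_m(r) = -(m-1) + r + r^2 + ... + r^m. -/
noncomputable def f (m : ℕ) (r : ℝ) : ℝ := -((m : ℝ) - 1) + ∑ j ∈ Finset.Icc 1 m, r ^ j

open Set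

theorem existsUnique_mem_Ioo_eq_of_strictMonoOn {α δ : Type*} [ConditionallyCompleteLinearOrder α]
    [TopologicalSpace α] [OrderTopology α] [DenselyOrdered α] [LinearOrder δ] [TopologicalSpace δ]
    [OrderClosedTopology δ] {f : α → δ} {a b : α} {c : δ} (hab : a ≤ b)
    (hf : ContinuousOn f (Icc a b)) (hmono : StrictMonoOn f (Icc a b)) (ha : f a < c)
    (hb : c < f b) : ∃! x, x ∈ Ioo a b ∧ f x = c := by
  obtain ⟨x, hx, hfx⟩ := intermediate_value_Ioo hab hf ⟨ha, hb⟩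
  refine ⟨x, ⟨hx, hfx⟩, fun y ⟨hy, hfy⟩ => ?_⟩
  exact hmono.injOn (Ioo_subset_Icc_self hy) (Ioo_subset_Icc_self hx) (hfy.trans hfx.symm)

theorem continuous_f (m : ℕ) : Continuous (f m) := by
  unfold f
  fun_prop

theorem f_zero (m : ℕ) : f m 0 = 1 - m := by
  have hsum : ∑ j ∈ Finset.Icc 1 m, (0 : ℝ) ^ j = 0 :=
    Finset.sum_eq_zero fun j hj => zero_pow (by grind)
  rw [f, hsum]
  ring

theorem f_one (m : ℕ) : f m 1 = 1 := by
  simp [f]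

theorem f_strictMonoOn {m : ℕ} (hm : 1 ≤ m) : StrictMonoOn (f m) (Ici 0) := by
  intro a ha b _ hab
  have hsum : ∑ j ∈ Finset.Icc 1 m, a ^ j < ∑ j ∈ Finset.Icc 1 m, b ^ j :=
    Finset.sum_lt_sum (fun j _ => pow_le_pow_left₀ ha hab.le j)
      ⟨1, Finset.mem_Icc.mpr ⟨le_rfl, hm⟩, by simpa using hab⟩
  simp only [f]
  linarith

/-- f_m has a unique root in (0,1) for m ≥ 2. -/
theorem stmt4 (m : ℕ) (hm : 2 ≤ m) :
    ∃! r : ℝ, r ∈ Set.Ioo (0 : ℝ) 1 ∧ f m r = 0 := by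
  have hf0 : f m 0 < 0 := by
    rw [f_zero]
    have : (2 : ℝ) ≤ m := by exact_mod_cast hm
    linarith
  exact existsUnique_mem_Ioo_eq_of_strictMonoOn zero_le_one (continuous_f m).continuousOn
    ((f_strictMonoOn (by omega)).mono Icc_subset_Ici_self) hf0 (by rw [f_one]; exact one_pos)
end

section
/- For n = 2 boxes with positive costs c_1, c_2 and k ≥ 1 balls, define C(i,j) = i·c_1 + (k−i)·c_2 + c_1 if i < j, = i·c_1 + (k−i)·c_2 if i = j, and = i·c_1 + (k−i)·c_2 + c_2 if i > j, and let q_k(j) = 1 − k·c_1^{k−j}·c_2^j/T_k([2]). Then for every i ∈ {0,...,k}, ∑_{j=0}^k q_k(j)·C(i,j) = k·T_{k+1}([2])/T_k([2]). -/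
/-- T_k([2]) = ∑_{j=0}^k c₁^{k-j} c₂^j. -/
noncomputable def T2 (c₁ c₂ : ℝ) (k : ℕ) : ℝ :=
  ∑ j ∈ Finset.range (k + 1), c₁ ^ (k - j) * c₂ ^ j

/-- Cost C(i,j) when the Hider hides i balls in box 1 and the Searcher opens box 1
at most j times in her first k searches. -/
noncomputable def Cost (c₁ c₂ : ℝ) (k i j : ℕ) : ℝ :=
  (i : ℝ) * c₁ + ((k : ℝ) - i) * c₂ + (if i < j then c₁ else if i = j then 0 else c₂)

/-!
Moving one ball from box 2 to box 1 (`i ↦ i + 1`) changes `C(i, j)` by `c₁ - c₂`, plus `c₂` at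
`j = i` and minus `c₁` at `j = i + 1`. Since the `q_k(j)` sum to `1` and
`c₂ q_k(i) - c₁ q_k(i + 1) = c₂ - c₁`, the expected cost does not depend on `i`. At `i = 0` it is
`k c₂ + c₁ (1 - q_k(0)) = k (c₂ T_k + c₁^(k+1)) / T_k = k T_{k+1} / T_k`.
-/

open Finset

lemma T2_pos {c₁ c₂ : ℝ} (h₁ : 0 < c₁) (h₂ : 0 < c₂) (k : ℕ) : 0 < T2 c₁ c₂ k :=
  sum_pos (fun _ _ => by positivity) ⟨0, by simp⟩

lemma T2_succ (c₁ c₂ : ℝ) (k : ℕ) : T2 c₁ c₂ (k + 1) = c₂ * T2 c₁ c₂ k + c₁ ^ (k + 1) := by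
  simp only [T2, sum_range_succ' _ (k + 1), mul_sum, Nat.add_sub_add_right, Nat.sub_zero, pow_zero,
    mul_one, pow_succ]
  congr 1
  exact sum_congr rfl fun _ _ => by ring

lemma cost_zero_left (c₁ c₂ : ℝ) (k j : ℕ) :
    Cost c₁ c₂ k 0 j = k * c₂ + if j = 0 then 0 else c₁ := by
  simp only [Cost]
  push_cast
  split_ifs <;> first | omega | ring

lemma cost_succ_left (c₁ c₂ : ℝ) (k i j : ℕ) :
    Cost c₁ c₂ k (i + 1) j = Cost c₁ c₂ k i j + (c₁ - c₂) + (if j = i then c₂ else 0)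
      - (if j = i + 1 then c₁ else 0) := by
  simp only [Cost]
  push_cast
  split_ifs <;> first | omega | ring

lemma sum_mul_cost_zero_left (c₁ c₂ : ℝ) (k : ℕ) (w : ℕ → ℝ) :
    ∑ j ∈ range (k + 1), w j * Cost c₁ c₂ k 0 j =
      k * c₂ * ∑ j ∈ range (k + 1), w j + c₁ * (∑ j ∈ range (k + 1), w j - w 0) := by
  simp only [sum_range_succ' _ k, cost_zero_left, Nat.succ_ne_zero, if_false, if_true, mul_add,
    sum_add_distrib, ← sum_mul]
  ring

lemma sum_mul_cost_succ_left (c₁ c₂ : ℝ) {k i : ℕ} (hi : i < k) (w : ℕ → ℝ) :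
    ∑ j ∈ range (k + 1), w j * Cost c₁ c₂ k (i + 1) j =
      ∑ j ∈ range (k + 1), w j * Cost c₁ c₂ k i j + (c₁ - c₂) * ∑ j ∈ range (k + 1), w j
        + c₂ * w i - c₁ * w (i + 1) := by
  simp only [cost_succ_left, mul_add, mul_sub, mul_ite, mul_zero, sum_add_distrib, sum_sub_distrib,
    sum_ite_eq', mem_range, ← sum_mul]
  rw [if_pos (by omega), if_pos (by omega)]
  ring

/-- The Searcher's mixed strategy `q_k`. -/
noncomputable def equalizingWeight (c₁ c₂ : ℝ) (k j : ℕ) : ℝ :=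
  1 - (k : ℝ) * c₁ ^ (k - j) * c₂ ^ j / T2 c₁ c₂ k

lemma sum_equalizingWeight {c₁ c₂ : ℝ} {k : ℕ} (hT : T2 c₁ c₂ k ≠ 0) :
    ∑ j ∈ range (k + 1), equalizingWeight c₁ c₂ k j = 1 := by
  simp only [equalizingWeight, sum_sub_distrib, sum_const, card_range, nsmul_one, mul_assoc,
    ← sum_div, ← mul_sum]
  rw [← T2, mul_div_cancel_right₀ _ hT]
  push_cast
  ring

lemma equalizingWeight_succ (c₁ c₂ : ℝ) {k i : ℕ} (hi : i < k) :
    c₂ * equalizingWeight c₁ c₂ k i - c₁ * equalizingWeight c₁ c₂ k (i + 1) = c₂ - c₁ := by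
  have : k - i = k - (i + 1) + 1 := by omega
  simp only [equalizingWeight, this, pow_succ]
  ring

theorem stmt7_general (c₁ c₂ : ℝ) (h₁ : 0 < c₁) (h₂ : 0 < c₂) (k : ℕ)
    (i : ℕ) (hi : i ≤ k) :
    ∑ j ∈ Finset.range (k + 1),
        (1 - (k : ℝ) * c₁ ^ (k - j) * c₂ ^ j / T2 c₁ c₂ k) * Cost c₁ c₂ k i j =
      (k : ℝ) * T2 c₁ c₂ (k + 1) / T2 c₁ c₂ k := by
  have hT := (T2_pos h₁ h₂ k).ne'
  change ∑ j ∈ range (k + 1), equalizingWeight c₁ c₂ k j * Cost c₁ c₂ k i j = _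
  have independent : ∀ i ≤ k, ∑ j ∈ range (k + 1), equalizingWeight c₁ c₂ k j * Cost c₁ c₂ k i j =
      ∑ j ∈ range (k + 1), equalizingWeight c₁ c₂ k j * Cost c₁ c₂ k 0 j := by
    intro i hi
    induction i with
    | zero => rfl
    | succ i ih =>
      rw [sum_mul_cost_succ_left c₁ c₂ (by omega), add_sub_assoc,
        equalizingWeight_succ c₁ c₂ (by omega), sum_equalizingWeight hT, ih (by omega)]
      ring
  rw [independent i hi, sum_mul_cost_zero_left, sum_equalizingWeight hT, T2_succ]
  simp only [equalizingWeight, Nat.sub_zero, pow_zero, mul_one]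
  field_simp
  ring

/-- the mixed strategy q_k equalizes the cost. -/
theorem stmt7 (c₁ c₂ : ℝ) (h₁ : 0 < c₁) (h₂ : 0 < c₂) (k : ℕ) (hk : 1 ≤ k)
    (i : ℕ) (hi : i ≤ k) :
    ∑ j ∈ Finset.range (k + 1),
        (1 - (k : ℝ) * c₁ ^ (k - j) * c₂ ^ j / T2 c₁ c₂ k) * Cost c₁ c₂ k i j =
      (k : ℝ) * T2 c₁ c₂ (k + 1) / T2 c₁ c₂ k :=
  stmt7_general c₁ c₂ h₁ h₂ k i hi
end

section
/- For n boxes with positive costs, defining T_k([n]) as the complete homogeneous symmetric polynomial of degree k and U([n],k) = k·T_{k+1}([n])/T_k([n]), the recursion U([n],k) = c_n + (c_n·T_{k−1}([n])/T_k([n]))·U([n],k−1) + (T_k([n−1])/T_k([n]))·U([n−1],k) holds for n + k ≥ 3 with n,k ≥ 1. -/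
/-- `T` with integer degree, with the convention `T_j = 0` for `j < 0`. -/
noncomputable def Tz (c : ℕ → ℝ) (n : ℕ) (k : ℤ) : ℝ :=
  if 0 ≤ k then T c n k.toNat else 0

/-- U([n],k) = k·T_{k+1}([n])/T_k([n]). -/
noncomputable def U (c : ℕ → ℝ) (n k : ℕ) : ℝ := (k : ℝ) * T c n (k + 1) / T c n k

/-!
Splitting off the exponent of the last variable gives
`T_{k+1}([n]) = c_n T_k([n]) + T_{k+1}([n-1])`. Since `T_k · U(·, k) = k T_{k+1}`, multiplying
the recursion by `T_k([n])` reduces it to `k T_{k+1}([n]) = k c_n T_k([n]) + k T_{k+1}([n-1])`,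
which is that identity times `k`.
-/

open Finset Finset.Nat

lemma T_zero_right (c : ℕ → ℝ) (n : ℕ) : T c n 0 = 1 := by
  simp [T, antidiagonalTuple_zero_right]

lemma T_zero_succ (c : ℕ → ℝ) (k : ℕ) : T c 0 (k + 1) = 0 := by
  simp [T]

lemma T_succ_eq_sum_antidiagonal (c : ℕ → ℝ) (n k : ℕ) :
    T c (n + 1) k = ∑ p ∈ antidiagonal k, T c n p.1 * c n ^ p.2 := by
  simp_rw [T, Finset.sum_mul]
  rw [Finset.sum_sigma']
  refine Finset.sum_bij' (fun x _ => ⟨(∑ i : Fin n, x i.castSucc, x (Fin.last n)), Fin.init x⟩)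
    (fun q _ => Fin.snoc q.2 q.1.2) ?_ ?_ ?_ ?_ ?_
  · intro x hx
    rw [mem_antidiagonalTuple, Fin.sum_univ_castSucc] at hx
    simpa [mem_antidiagonalTuple, Fin.init] using hx
  · rintro ⟨⟨a, b⟩, y⟩ hq
    simp only [Finset.mem_sigma, HasAntidiagonal.mem_antidiagonal, mem_antidiagonalTuple] at hq
    simp [mem_antidiagonalTuple, Fin.sum_univ_castSucc, hq.2]
    omega
  · intro x _
    exact Fin.snoc_init_self x
  · rintro ⟨⟨a, b⟩, y⟩ hq
    simp only [Finset.mem_sigma, HasAntidiagonal.mem_antidiagonal, mem_antidiagonalTuple] at hq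
    simp [hq.2]
  · intro x _
    rw [Fin.prod_univ_castSucc]
    rfl

lemma T_succ_succ (c : ℕ → ℝ) (n k : ℕ) :
    T c (n + 1) (k + 1) = c n * T c (n + 1) k + T c n (k + 1) := by
  rw [T_succ_eq_sum_antidiagonal, T_succ_eq_sum_antidiagonal, Nat.sum_antidiagonal_succ',
    Finset.mul_sum]
  simp only [pow_zero, mul_one, pow_succ]
  rw [add_comm]
  congr 1
  exact Finset.sum_congr rfl fun p _ => by ring

lemma T_pos (c : ℕ → ℝ) {n : ℕ} (hc : ∀ i < n, 0 < c i) (hn : n ≠ 0) (k : ℕ) :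
    0 < T c n k := by
  obtain ⟨m, rfl⟩ := Nat.exists_eq_succ_of_ne_zero hn
  refine Finset.sum_pos (fun x _ => Finset.prod_pos fun i _ => pow_pos (hc i i.2) _)
    ⟨Pi.single 0 k, ?_⟩
  simp [mem_antidiagonalTuple]

/-- For `n = 0` and `k ≥ 1` both sides vanish, `U c 0 k` being `0 / 0 = 0`. -/
lemma T_mul_U (c : ℕ → ℝ) {n : ℕ} (hc : ∀ i < n, 0 < c i) (k : ℕ) :
    T c n k * U c n k = k * T c n (k + 1) := by
  rcases n with _ | n
  · rcases k with _ | k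
    · simp [U]
    · simp [U, T_zero_succ]
  · have := (T_pos c hc n.succ_ne_zero k).ne'
    unfold U
    field_simp

theorem stmt9_general (c : ℕ → ℝ) (hc : ∀ i, 0 < c i) (n k : ℕ)
    (hn : 1 ≤ n) (hk : 1 ≤ k) :
    U c n k = c (n - 1) + (c (n - 1) * T c n (k - 1) / T c n k) * U c n (k - 1)
      + (T c (n - 1) k / T c n k) * U c (n - 1) k := by
  obtain ⟨m, rfl⟩ := Nat.exists_eq_add_of_le' hn
  obtain ⟨j, rfl⟩ := Nat.exists_eq_add_of_le' hk
  simp only [Nat.add_sub_cancel]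
  have hc' : ∀ {n}, ∀ i < n, 0 < c i := fun i _ => hc i
  have hT : T c (m + 1) (j + 1) ≠ 0 := (T_pos c hc' m.succ_ne_zero (j + 1)).ne'
  have hU : T c (m + 1) (j + 1) * U c (m + 1) (j + 1) = (j + 1) * T c (m + 1) (j + 2) := by
    exact_mod_cast T_mul_U c hc' (j + 1)
  have hU_pred : T c (m + 1) j * U c (m + 1) j = j * T c (m + 1) (j + 1) := T_mul_U c hc' j
  have hU_init : T c m (j + 1) * U c m (j + 1) = (j + 1) * T c m (j + 2) := by
    exact_mod_cast T_mul_U c hc' (j + 1)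
  have hrec := T_succ_succ c m (j + 1)
  field_simp
  linear_combination hU + (j + 1) * hrec - c m * hU_pred - hU_init

/-- recursion for U. -/
theorem stmt9 (c : ℕ → ℝ) (hc : ∀ i, 0 < c i) (n k : ℕ)
    (hn : 1 ≤ n) (hk : 1 ≤ k) (hnk : 3 ≤ n + k) :
    U c n k = c (n - 1) + (c (n - 1) * T c n (k - 1) / T c n k) * U c n (k - 1)
      + (T c (n - 1) k / T c n k) * U c (n - 1) k :=
  stmt9_general c hc n k hn hk
end
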